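/- Let X be a non-empty connected noetherian scheme and f : X' → X a proper surjective morphism of noetherian schemes. Define a graph Γ whose vertices are the connected components of X' and whose edges are the connected components of X'' = X' ×_X X', with an edge e joining the components pr₁(e) and pr₂(e). Then the graph Γ is connected. -/

import Mathlib

/-!
Let `S ⊆ X'` be the union of the components reachable in `Γ` from a fixed one. Since `X'` is
noetherian it has finitely many connected components, so `S` and its complement are closed.
Two points of `X'` with the same image in `X` come from a point of `X''`, hence lie in adjacent
components, so `f(S)` and `f(X' \ S)` are disjoint. As `f` is closed and surjective they are
complementary closed sets, and connectedness of `X` forces `S = X'`.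
-/

open AlgebraicGeometry CategoryTheory CategoryTheory.Limits

open TopologicalSpace in
instance TopologicalSpace.NoetherianSpace.finite_connectedComponents {α : Type*}
    [TopologicalSpace α] [NoetherianSpace α] : Finite (ConnectedComponents α) := by
  have : Finite (irreducibleComponents α) := NoetherianSpace.finite_irreducibleComponents
  refine Finite.of_surjective
    (fun Z : irreducibleComponents α => ConnectedComponents.mk Z.2.1.nonempty.some) ?_
  rintro ⟨x⟩
  refine ⟨⟨irreducibleComponent x, irreducibleComponent_mem_irreducibleComponents x⟩, ?_⟩
  have hZ : IsIrreducible (irreducibleComponent x) := isIrreducible_irreducibleComponent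
  exact ConnectedComponents.coe_eq_coe'.mpr <|
    hZ.isPreirreducible.isPreconnected.subset_connectedComponent mem_irreducibleComponent
      hZ.nonempty.some_mem

lemma IsClosedMap.isClopen_image_of_saturated {α β : Type*} [TopologicalSpace α]
    [TopologicalSpace β] {f : α → β} (hf : IsClosedMap f) (hsurj : Function.Surjective f)
    {S : Set α} (hS : IsClopen S) (hsat : ∀ a b, f a = f b → a ∈ S → b ∈ S) :
    IsClopen (f '' S) := by
  have hcompl : (f '' S)ᶜ = f '' Sᶜ := by
    ext y
    obtain ⟨a, rfl⟩ := hsurj y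
    constructor
    · intro ha
      exact ⟨a, fun haS => ha ⟨a, haS, rfl⟩, rfl⟩
    · rintro ⟨b, hbS, hba⟩ ⟨c, hcS, hca⟩
      exact hbS (hsat c b (hca.trans hba.symm) hcS)
  exact ⟨hf _ hS.1, by rw [← isClosed_compl_iff, hcompl]; exact hf _ hS.compl.1⟩

lemma ConnectedComponents.reflTransGen_of_isClosedMap {α β : Type*} [TopologicalSpace α]
    [TopologicalSpace β] [PreconnectedSpace β] [Finite (ConnectedComponents α)] {f : α → β}
    (hf : IsClosedMap f) (hsurj : Function.Surjective f)
    (r : ConnectedComponents α → ConnectedComponents α → Prop)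
    (hr : ∀ a b, f a = f b → r (mk a) (mk b)) (v w : ConnectedComponents α) :
    Relation.ReflTransGen r v w := by
  obtain ⟨x, rfl⟩ := surjective_coe v
  obtain ⟨y, rfl⟩ := surjective_coe w
  set S : Set α := mk ⁻¹' {c | Relation.ReflTransGen r (mk x) c}
  have hsat : ∀ a b, f a = f b → a ∈ S → b ∈ S := fun a b hab ha => ha.tail (hr a b hab)
  have hS : IsClopen S := (isClopen_discrete _).preimage continuous_coe
  have himage : f '' S = Set.univ :=
    (hf.isClopen_image_of_saturated hsurj hS hsat).eq_univ ⟨f x, x, .refl, rfl⟩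
  obtain ⟨a, haS, hay⟩ : f y ∈ f '' S := himage ▸ Set.mem_univ _
  exact hsat a y hay haS

theorem component_graph_connected_general
    (X X' : AlgebraicGeometry.Scheme) [IsNoetherian X']
    [ConnectedSpace X]
    (f : X' ⟶ X) (hp : IsProper f) (hs : Function.Surjective f.base) :
    ∀ v w : _root_.ConnectedComponents X',
      Relation.ReflTransGen
        (fun v w =>
          ∃ z : ↥(pullback f f),
            (ConnectedComponents.mk ((pullback.fst f f).base z) = v ∧
              ConnectedComponents.mk ((pullback.snd f f).base z) = w) ∨
            (ConnectedComponents.mk ((pullback.fst f f).base z) = w ∧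
              ConnectedComponents.mk ((pullback.snd f f).base z) = v))
        v w := by
  refine ConnectedComponents.reflTransGen_of_isClosedMap f.isClosedMap hs _ fun a b hab => ?_
  obtain ⟨z, hza, hzb⟩ := Scheme.Pullback.exists_preimage_pullback a b hab
  exact ⟨z, .inl ⟨congrArg _ hza, congrArg _ hzb⟩⟩

/-- Let `f : X' ⟶ X` be a proper surjective morphism of noetherian schemes with
`X` connected. Form the graph whose vertices are the connected components of `X'` and whose
edges are the connected components of `X'' = X' ×_X X'`, an edge `e` joining the components of
`pr₁(e)` and `pr₂(e)`. Then this graph is connected: any two vertices are joined by a walk. -/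
theorem component_graph_connected
    (X X' : AlgebraicGeometry.Scheme) [IsNoetherian X] [IsNoetherian X']
    [Nonempty X] [ConnectedSpace X]
    (f : X' ⟶ X) (hp : IsProper f) (hs : Function.Surjective f.base) :
    ∀ v w : _root_.ConnectedComponents X',
      Relation.ReflTransGen
        (fun v w =>
          ∃ z : ↥(pullback f f),
            (ConnectedComponents.mk ((pullback.fst f f).base z) = v ∧
              ConnectedComponents.mk ((pullback.snd f f).base z) = w) ∨
            (ConnectedComponents.mk ((pullback.fst f f).base z) = w ∧
              ConnectedComponents.mk ((pullback.snd f f).base z) = v))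
        v w :=
  component_graph_connected_general X X' f hp hs
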